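/- arXiv:2304.06281 — 2 statements merged into one kernel-verified Lean document; each statement's English description precedes it below -/
import Mathlib

section
/- Correctness of k-step lookahead shielding with re-synthesis period m ≤ k: suppose at times t0 = 0 < t1 < t2 < ... shields are re-synthesized, with t_{j+1} − t_j ≤ k, and each shield synthesized at time t_j guarantees that states at times t_j, t_j + 1, ..., t_{j+1} lie in F provided s_{t_j} ∈ W_k. If additionally each shield's strategy ensures the state at the re-synthesis time lies again in W_k, then every state of the infinite trace lies in F. -/
/-- Correctness of k-step lookahead shielding with re-synthesis:
if shields are re-synthesized at times t with gaps at most k, each shield keeps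
the states of its interval in F provided its initial state lies in W_k, and each
shield also re-establishes W_k at the next re-synthesis time, then every state
of the infinite trace lies in F. -/
theorem stmt16 {G I O : Type} (δ : G → I → O → G) (F : Set G) (k : ℕ)
    (Wseq : ℕ → Set G) (h0 : Wseq 0 = Set.univ)
    (hsucc : ∀ j, Wseq (j + 1) = {g : G | g ∈ F ∧ ∀ σI : I, ∃ σO : O, δ g σI σO ∈ Wseq j})
    (s : ℕ → G) (t : ℕ → ℕ) (ht0 : t 0 = 0) (hmono : StrictMono t)
    (hgap : ∀ j, t (j + 1) - t j ≤ k)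
    (hinit : s (t 0) ∈ Wseq k)
    (hshield : ∀ j, s (t j) ∈ Wseq k →
      ∀ i, t j ≤ i → i ≤ t (j + 1) → s i ∈ F)
    (hre : ∀ j, s (t j) ∈ Wseq k → s (t (j + 1)) ∈ Wseq k) :
    ∀ i, s i ∈ F := by
  have hW : ∀ j, s (t j) ∈ Wseq k := by
    intro j
    induction j with
    | zero => exact hinit
    | succ n ih => exact hre n ih
  intro i
  have hex : ∃ n, i < t n := ⟨i + 1, lt_of_lt_of_le (Nat.lt_succ_self i) (hmono.le_apply)⟩
  classical
  let n := Nat.find hex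
  have hn : i < t n := Nat.find_spec hex
  have hn0 : n ≠ 0 := by
    intro h
    have := hn
    rw [h, ht0] at this
    omega
  obtain ⟨j, hj⟩ := Nat.exists_eq_succ_of_ne_zero hn0
  have hle : t j ≤ i := by
    by_contra h
    have : j < n := by omega
    exact absurd (Nat.find_min hex this : ¬ i < t j) (by omega)
  have hn' : i ≤ t (j + 1) := by
    have : t n = t (j + 1) := by rw [hj]
    omega
  exact hshield j (hW j) i hle hn'
end

section
/- If a shield synthesized from a nonempty winning region exists (i.e., g0 ∈ W), then for every reachable shield state q and every input x there exists at least one action a' with δ(q, (x, a')) ∈ W; hence the shield's output function λ defined by the case split (pass through safe actions, otherwise substitute some safe action) is total on reachable states. -/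
/-- If g0 ∈ W for a winning region W satisfying the fixed-point
property, then at every reachable shield state q (Reach being the least set
containing g0 and closed under transitions staying in W) and every input x there
is an action a' with δ(q,(x,a')) ∈ W; hence a total output function λ with the
case-split behavior (pass through safe actions, otherwise substitute a safe one)
exists on reachable states. -/
theorem stmt19 {G X A : Type} (δ : G → X × A → G) (F W : Set G)
    (hfix : ∀ g ∈ W, g ∈ F ∧ ∀ x : X, ∃ a : A, δ g (x, a) ∈ W)
    (g0 : G) (hg0 : g0 ∈ W)
    (Reach : Set G) (hR0 : g0 ∈ Reach)
    (hRstep : ∀ q ∈ Reach, ∀ (x : X) (a : A), δ q (x, a) ∈ W → δ q (x, a) ∈ Reach)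
    (hRmin : ∀ Y : Set G, g0 ∈ Y →
      (∀ q ∈ Y, ∀ (x : X) (a : A), δ q (x, a) ∈ W → δ q (x, a) ∈ Y) → Reach ⊆ Y) :
    (∀ q ∈ Reach, ∀ x : X, ∃ a' : A, δ q (x, a') ∈ W) ∧
    ∃ lam : G → X → A → A, ∀ q ∈ Reach, ∀ (x : X) (a : A),
      δ q (x, lam q x a) ∈ W ∧ (δ q (x, a) ∈ W → lam q x a = a) := by
  classical
  have hRW : Reach ⊆ W := by
    have h := hRmin (Reach ∩ W) ⟨hR0, hg0⟩
      (fun q hq x a hW => ⟨hRstep q hq.1 x a hW, hW⟩)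
    exact fun q hq => (h hq).2
  have hEx : ∀ q ∈ Reach, ∀ x : X, ∃ a' : A, δ q (x, a') ∈ W :=
    fun q hq x => (hfix q (hRW hq)).2 x
  refine ⟨hEx, ?_⟩
  refine ⟨fun q x a =>
    if h : δ q (x, a) ∈ W then a
    else if h2 : ∃ a', δ q (x, a') ∈ W then h2.choose else a, ?_⟩
  intro q hq x a
  by_cases h : δ q (x, a) ∈ W
  · simp [h]
  · have h2 : ∃ a', δ q (x, a') ∈ W := hEx q hq x
    simp only [h, dif_neg, not_false_iff, dif_pos h2]
    exact ⟨h2.choose_spec, fun hc => hc.elim⟩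
end
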